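/- For ξ ∈ Im ℍ and φ, ψ ∈ ℍ, the bilinear moment map μ(φ,ψ) := (1/2)γ̃*(φψ*) satisfies the identity [ξ, μ(φ,ψ)] = μ(φ, ρ(ξ)ψ) + μ(ψ, ρ(ξ)φ), where [·,·] is the induced Lie bracket action of Im ℍ on (Im ℍ ⊗ Im ℍ)*. -/

import Mathlib

/-- Pairing of the bilinear moment map μ(φ,ψ) = (1/2)γ̃*(φψ*) with v ⊗ w ∈ Im ℍ ⊗ Im ℍ:
⟨μ(φ,ψ), v ⊗ w⟩ = (1/2)Re((-(vφw))(star ψ)). -/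
noncomputable def muB (φ ψ v w : Quaternion ℝ) : ℝ :=
  (1 / 2 : ℝ) * ((-(v * φ * w)) * star ψ).re

/- STATEMENT 3: For ξ ∈ Im ℍ and φ, ψ ∈ ℍ: [ξ, μ(φ,ψ)] = μ(φ, ρ(ξ)ψ) + μ(ψ, ρ(ξ)φ),
where ρ(ξ)Φ = -Φξ and the bracket [ξ,·] acts on (Im ℍ ⊗ Im ℍ)* by the coadjoint action
on the second variable: ⟨[ξ,T], v ⊗ w⟩ = -⟨T, v ⊗ [ξ,w]⟩ with [ξ,w] = ξw - wξ. -/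
theorem stmt_3 (ξ φ ψ v w : Quaternion ℝ) (hξ : ξ.re = 0) (hv : v.re = 0) (hw : w.re = 0) :
    -muB φ ψ v (ξ * w - w * ξ) = muB φ (-(ψ * ξ)) v w + muB ψ (-(φ * ξ)) v w := by
  simp only [muB, Quaternion.re_mul, Quaternion.re_star, Quaternion.imI_star,
    Quaternion.imJ_star, Quaternion.imK_star, Quaternion.re_neg, Quaternion.imI_neg,
    Quaternion.imJ_neg, Quaternion.imK_neg, Quaternion.re_sub, Quaternion.imI_sub,
    Quaternion.imJ_sub, Quaternion.imK_sub, Quaternion.imI_mul, Quaternion.imJ_mul,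
    Quaternion.imK_mul, hξ, hv, hw]
  ring
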